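/- arXiv:math/0601077 — 15 statements merged into one kernel-verified Lean document; each statement's English description precedes it below -/
import Mathlib

section
/- In a left F-quasigroup Q, the maps α and β commute: αβ(x) = βα(x) for all x ∈ Q. -/
/-- In a left F-quasigroup Q, the maps α and β commute. -/
theorem stmt0 {Q : Type*} (mul : Q → Q → Q)
    (hL : ∀ a : Q, Function.Bijective (mul a))
    (hR : ∀ a : Q, Function.Bijective (fun x => mul x a))
    (α β : Q → Q)
    (hα : ∀ x, mul x (α x) = x) (hβ : ∀ x, mul (β x) x = x)
    (hF : ∀ x y z, mul x (mul y z) = mul (mul x y) (mul (α x) z)) :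
    ∀ x, α (β x) = β (α x) := by
  have hhom : ∀ a b, α (mul a b) = mul (α a) (α b) := by
    intro a b
    have h := hF a b (α b)
    rw [hα b] at h
    apply (hL (mul a b)).1
    rw [hα (mul a b), ← h]
  intro x
  have h1 : mul (α (β x)) (α x) = α x := by
    rw [← hhom, hβ]
  have h2 : mul (β (α x)) (α x) = α x := hβ (α x)
  exact (hR (α x)).1 (h1.trans h2.symm)
end

section
/- In a left F-quasigroup Q, the map α is an endomorphism: α(x·y) = α(x)·α(y) for all x,y ∈ Q. -/
/-- In a left F-quasigroup Q, the map α is an endomorphism. -/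
theorem stmt1 {Q : Type*} (mul : Q → Q → Q)
    (hL : ∀ a : Q, Function.Bijective (mul a))
    (hR : ∀ a : Q, Function.Bijective (fun x => mul x a))
    (α : Q → Q)
    (hα : ∀ x, mul x (α x) = x)
    (hF : ∀ x y z, mul x (mul y z) = mul (mul x y) (mul (α x) z)) :
    ∀ x y, α (mul x y) = mul (α x) (α y) := by
  intro x y
  apply (hL (mul x y)).1
  have := hF x y (α y)
  rw [hα y] at this
  rw [hα (mul x y), ← this]
end

section
/- In a left F-quasigroup Q, for a,b ∈ Q, the translations R_a and L_b commute (i.e., b·(x·a) = (b·x)·a for all x) if and only if α(b) = β(a). -/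
/-- In a left F-quasigroup, R_a and L_b commute iff α(b) = β(a). -/
theorem stmt2 {Q : Type*} (mul : Q → Q → Q)
    (hL : ∀ a : Q, Function.Bijective (mul a))
    (hR : ∀ a : Q, Function.Bijective (fun x => mul x a))
    (α β : Q → Q)
    (hα : ∀ x, mul x (α x) = x) (hβ : ∀ x, mul (β x) x = x)
    (hF : ∀ x y z, mul x (mul y z) = mul (mul x y) (mul (α x) z))
    (a b : Q) :
    (∀ x, mul b (mul x a) = mul (mul b x) a) ↔ α b = β a := by
  constructor
  · intro h
    have key : ∀ y : Q, mul y (mul (α b) a) = mul y a := by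
      intro y
      obtain ⟨x, hx⟩ := (hL b).2 y
      calc mul y (mul (α b) a) = mul (mul b x) (mul (α b) a) := by rw [hx]
        _ = mul b (mul x a) := (hF b x a).symm
        _ = mul (mul b x) a := h x
        _ = mul y a := by rw [hx]
    have h1 : mul (α b) a = a := (hL b).1 (key b)
    have h2 : mul (α b) a = mul (β a) a := by rw [h1, hβ]
    exact (hR a).1 h2
  · intro h x
    rw [hF b x a, h, hβ]
end

section
/- In a left F-quasigroup Q, for every a ∈ Q, the translations R_{α(a)} and L_{β(a)} commute: β(a)·(x·α(a)) = (β(a)·x)·α(a) for all x ∈ Q. -/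
/-- In a left F-quasigroup, R_{α(a)} and L_{β(a)} commute for every a. -/
theorem stmt3 {Q : Type*} (mul : Q → Q → Q)
    (hL : ∀ a : Q, Function.Bijective (mul a))
    (hR : ∀ a : Q, Function.Bijective (fun x => mul x a))
    (α β : Q → Q)
    (hα : ∀ x, mul x (α x) = x) (hβ : ∀ x, mul (β x) x = x)
    (hF : ∀ x y z, mul x (mul y z) = mul (mul x y) (mul (α x) z)) :
    ∀ a x, mul (β a) (mul x (α a)) = mul (mul (β a) x) (α a) := by
  intro a x
  have h1 := hF (β a) a (α a)
  rw [hα a, hβ a] at h1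
  -- h1 : a = mul a (mul (α (β a)) (α a))
  have h2 : mul (α (β a)) (α a) = α a := ((hL a).1 (h1.symm.trans (hα a).symm))
  rw [hF (β a) x (α a), h2]
end

section
/- In an F-quasigroup Q, both α and β are endomorphisms of Q and αβ = βα. -/
/-- In an F-quasigroup, α and β are endomorphisms and αβ = βα. -/
theorem stmt4 {Q : Type*} (mul : Q → Q → Q)
    (hL : ∀ a : Q, Function.Bijective (mul a))
    (hR : ∀ a : Q, Function.Bijective (fun x => mul x a))
    (α β : Q → Q)
    (hα : ∀ x, mul x (α x) = x) (hβ : ∀ x, mul (β x) x = x)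
    (hFl : ∀ x y z, mul x (mul y z) = mul (mul x y) (mul (α x) z))
    (hFr : ∀ x y z, mul (mul z y) x = mul (mul z (β x)) (mul y x)) :
    (∀ x y, α (mul x y) = mul (α x) (α y)) ∧
    (∀ x y, β (mul x y) = mul (β x) (β y)) ∧
    (∀ x, α (β x) = β (α x)) := by
  have hαmul : ∀ x y, α (mul x y) = mul (α x) (α y) := by
    intro x y
    apply (hL (mul x y)).1
    have h := hFl x y (α y)
    rw [hα y] at h
    rw [hα (mul x y), ← h]
  have hβmul : ∀ x y, β (mul x y) = mul (β x) (β y) := by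
    intro x y
    apply (hR (mul x y)).1
    have h := hFr y x (β x)
    rw [hβ x] at h
    simp only []
    rw [hβ (mul x y), ← h]
  refine ⟨hαmul, hβmul, fun x => ?_⟩
  apply (hL (β x)).1
  rw [hα (β x)]
  have h := hβmul x (α x)
  rw [hα x] at h
  exact h
end

section
/- Let Q be a quasigroup. If some principal loop isotope (Q,+) with x + y = R_b⁻¹(x)·L_a⁻¹(y) is a group, then every principal loop isotope of Q is a group. -/
/-- The principal isotope x + y = R_b⁻¹(x)·L_a⁻¹(y) is a group: there are
inverses `la` of L_a and `ra` of R_b, and the isotope operation is associative. -/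
def isGroupIsotope {Q : Type*} (mul : Q → Q → Q) (a b : Q) : Prop :=
  ∃ la ra : Q → Q,
    (∀ x, mul a (la x) = x) ∧ (∀ x, la (mul a x) = x) ∧
    (∀ x, mul (ra x) b = x) ∧ (∀ x, ra (mul x b) = x) ∧
    (∀ x y z, mul (ra (mul (ra x) (la y))) (la z) = mul (ra x) (la (mul (ra y) (la z))))

/-!
If the principal isotope `(Q, *)` at `(a, b)` is a group, then `u·v = (u·b) * (a·v)`, so the
quasigroup is an isotope `u·v = α u * β v` of a group. Every principal isotope is then of the form
`x ∘ y = f x * g y` with neutral element `e`, and the two unit laws force `f x = x * (g e)⁻¹` and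
`g y = (f e)⁻¹ * y`; hence `x ∘ y = x * c * y` with `c = (g e)⁻¹ * (f e)⁻¹`, which is associative.
-/

theorem mul_assoc_of_unit_laws {G : Type*} [Group G] (f g : G → G) (e : G)
    (hf : ∀ x, f x * g e = x) (hg : ∀ y, f e * g y = y) (x y z : G) :
    f (f x * g y) * g z = f x * g (f y * g z) := by
  obtain ⟨p, hf'⟩ : ∃ p, ∀ x, f x = x * p := ⟨_, fun x => eq_mul_inv_of_mul_eq (hf x)⟩
  obtain ⟨q, hg'⟩ : ∃ q, ∀ y, g y = q * y := ⟨_, fun y => eq_inv_mul_of_mul_eq (hg y)⟩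
  simp only [hf', hg', mul_assoc]

section Quasigroup

variable {Q : Type*} {mul : Q → Q → Q}

theorem exists_group_of_isGroupIsotope (hL : ∀ a : Q, Function.Bijective (mul a)) {a b : Q}
    (h : isGroupIsotope mul a b) :
    ∃ G : Group Q, letI := G; ∀ u v, mul u v = mul u b * mul a v := by
  obtain ⟨la, ra, -, hla, hra, hra', hassoc⟩ := h
  let _ : Mul Q := ⟨fun x y => mul (ra x) (la y)⟩
  let _ : One Q := ⟨mul a b⟩
  let _ : Inv Q := ⟨fun x => mul a (Function.surjInv (hL (ra x)).surjective (mul a b))⟩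
  refine ⟨Group.ofRightAxioms hassoc (fun x => ?_) (fun x => ?_), fun u v => ?_⟩
  · show mul (ra x) (la (mul a b)) = x
    rw [hla, hra]
  · show mul (ra x) (la (mul a _)) = mul a b
    rw [hla]
    exact Function.surjInv_eq (hL (ra x)).surjective _
  · show mul u v = mul (ra (mul u b)) (la (mul a v))
    rw [hra', hla]

theorem isGroupIsotope_of_mul_eq [Group Q] (hL : ∀ a : Q, Function.Bijective (mul a))
    (hR : ∀ a : Q, Function.Bijective (fun x => mul x a)) (α β : Q → Q)
    (hmul : ∀ u v, mul u v = α u * β v) (a b : Q) : isGroupIsotope mul a b := by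
  let eL := Equiv.ofBijective _ (hL a)
  let eR := Equiv.ofBijective _ (hR b)
  have hla : ∀ x, eL.symm (mul a x) = x := eL.symm_apply_apply
  have hla' : ∀ x, mul a (eL.symm x) = x := eL.apply_symm_apply
  have hra : ∀ x, eR.symm (mul x b) = x := eR.symm_apply_apply
  have hra' : ∀ x, mul (eR.symm x) b = x := eR.apply_symm_apply
  refine ⟨eL.symm, eR.symm, hla', hla, hra', hra, fun x y z => ?_⟩
  have hf : ∀ x, α (eR.symm x) * β (eL.symm (mul a b)) = x := fun x => by
    rw [← hmul, hla, hra']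
  have hg : ∀ y, α (eR.symm (mul a b)) * β (eL.symm y) = y := fun y => by
    rw [← hmul, hra, hla']
  have := mul_assoc_of_unit_laws (α ∘ eR.symm) (β ∘ eL.symm) (mul a b) hf hg x y z
  simpa only [Function.comp_apply, ← hmul] using this

end Quasigroup

/-- If some principal loop isotope of a quasigroup is a group, then every
principal loop isotope is a group. -/
theorem stmt5 {Q : Type*} (mul : Q → Q → Q)
    (hL : ∀ a : Q, Function.Bijective (mul a))
    (hR : ∀ a : Q, Function.Bijective (fun x => mul x a))
    (a b : Q) (h : isGroupIsotope mul a b) :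
    ∀ a' b' : Q, isGroupIsotope mul a' b' := by
  obtain ⟨_, hmul⟩ := exists_group_of_isGroupIsotope hL h
  exact isGroupIsotope_of_mul_eq hL hR _ _ hmul
end

section
/- Let Q be a quasigroup linear over a group (Q,+), i.e., x·y = f(x) + e + g(y) with f,g ∈ Aut(Q,+) and e ∈ Q. Then Q is a left F-quasigroup if and only if fg = gf and -x + f(x) lies in the center Z(Q,+) for all x ∈ Q. -/
private lemma stmt8_aux {Q : Type*} [AddGroup Q] (u v : Q)
    (h : ∀ t : Q, -u + (t + u) = -v + (t + v)) :
    u + -v ∈ AddSubgroup.center Q := by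
  rw [AddSubgroup.mem_center_iff]
  intro b
  have h1 := h b
  calc b + (u + -v) = u + (-u + (b + u)) + -v := by
        simp [add_assoc]
    _ = u + (-v + (b + v)) + -v := by rw [h1]
    _ = (u + -v) + b := by simp [add_assoc]

private lemma stmt8_aux2 {Q : Type*} [AddGroup Q] (c w : Q)
    (hc : c ∈ AddSubgroup.center Q) : w + (c + -w) ∈ AddSubgroup.center Q := by
  have h := AddSubgroup.mem_center_iff.mp hc (-w)
  rw [← h, add_neg_cancel_left]
  exact hc

private lemma stmt8_main {Q : Type*} [AddGroup Q] (a b c e t : Q)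
    (h1 : ∀ s, s + (-c + e) = (-c + e) + s)
    (h2 : ∀ s, s + (-b + a) = (-b + a) + s) :
    a + e + t = b + c + t + e + (-(b + c) + a) := by
  symm
  have hec : e + -c = -c + e := by
    have h := h1 c
    rw [add_neg_cancel_left] at h
    calc e + -c = (-c + e) + c + -c := by rw [← h]
      _ = -c + e := by simp [add_assoc]
  calc b + c + t + e + (-(b + c) + a)
      = b + (c + (t + (e + (-c + (-b + a))))) := by simp [add_assoc, neg_add_rev]
    _ = b + (c + (t + (e + ((-b + a) + -c)))) := by rw [h2 (-c)]
    _ = b + (c + (t + ((e + (-b + a)) + -c))) := by simp [add_assoc]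
    _ = b + (c + (t + (((-b + a) + e) + -c))) := by rw [h2 e]
    _ = b + (c + ((t + (-b + a)) + (e + -c))) := by simp [add_assoc]
    _ = b + (c + (((-b + a) + t) + (e + -c))) := by rw [h2 t]
    _ = b + ((c + (-b + a)) + (t + (e + -c))) := by simp [add_assoc]
    _ = b + (((-b + a) + c) + (t + (e + -c))) := by rw [h2 c]
    _ = a + (c + (t + (-c + e))) := by simp [add_assoc, hec]
    _ = a + (c + ((-c + e) + t)) := by rw [h1 t]
    _ = a + e + t := by simp [add_assoc]

/-- A quasigroup linear over a group, x·y = f(x) + e + g(y), is a left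
F-quasigroup iff fg = gf and -x + f(x) is central for all x. -/
theorem stmt8 {Q : Type*} [AddGroup Q] (f g : AddAut Q) (e : Q)
    (mul : Q → Q → Q) (hmul : ∀ x y, mul x y = f x + e + g y)
    (α : Q → Q) (hα : ∀ x, mul x (α x) = x) :
    (∀ x y z, mul x (mul y z) = mul (mul x y) (mul (α x) z)) ↔
      ((∀ x, f (g x) = g (f x)) ∧ ∀ x, -x + f x ∈ AddSubgroup.center Q) := by
  constructor
  · intro h
    -- Key equation from z = 0
    have K : ∀ x y, f x + e + g (f y)
        = f (f x) + f e + f (g y) + e + g (f (α x)) := by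
      intro x y
      have h0 := h x y 0
      simp only [hmul, map_add, map_zero, add_zero, ← add_assoc] at h0
      exact add_right_cancel h0
    have hs : ∀ x, g (f (α x)) = -(f (f x) + f e + e) + (f x + e) := by
      intro x
      have k0 := K x 0
      simp only [map_zero, add_zero] at k0
      rw [eq_neg_add_iff_add_eq]
      exact k0.symm
    obtain ⟨U, hU⟩ : ∃ U : Q → Q, ∀ x, U x = -(f (f x) + f e) + (f x + e) :=
      ⟨_, fun _ => rfl⟩
    have hU0 : U 0 = -(f e) + e := by rw [hU]; simp
    have star2 : ∀ x y, g (f y) = -(U x) + (f (g y) + U x) := by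
      intro x y
      have k := K x y
      rw [hs x] at k
      have k2 : g (f y) = -(f x + e) +
          (f (f x) + f e + f (g y) + e + (-(f (f x) + f e + e) + (f x + e))) := by
        rw [← k, neg_add_cancel_left]
      rw [k2, hU]
      simp only [neg_add_rev, neg_neg, add_assoc, neg_add_cancel_left,
        add_neg_cancel_left]
    have star3 : ∀ (x : Q) (t : Q),
        g (f (g.symm (f.symm t))) = -(U x) + (t + U x) := by
      intro x t
      have hg : f (g (g.symm (f.symm t))) = t := by simp
      have := star2 x (g.symm (f.symm t))
      rwa [hg] at this
    have hcc : ∀ x, U x + -(U 0) ∈ AddSubgroup.center Q := by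
      intro x
      exact stmt8_aux (U x) (U 0) (fun t => by rw [← star3 x t, star3 0 t])
    have hd : ∀ x, -(f (f x)) + f x ∈ AddSubgroup.center Q := by
      intro x
      have h1 := hcc x
      rw [hU, hU0] at h1
      have h2 := stmt8_aux2 _ (f e) h1
      have key : -(f (f x)) + f x
          = f e + ((-(f (f x) + f e) + (f x + e) + -(-(f e) + e)) + -(f e)) := by
        simp [neg_add_rev, add_assoc]
      rw [key]
      exact h2
    have hzc : ∀ x, -(f x) + x ∈ AddSubgroup.center Q := by
      intro x
      rw [AddSubgroup.mem_center_iff]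
      intro b
      have h2 := AddSubgroup.mem_center_iff.mp (hd x) (f b)
      apply f.injective
      simp only [map_add, map_neg]
      exact h2
    constructor
    · intro xx
      have hU0c : U 0 ∈ AddSubgroup.center Q := by rw [hU0]; exact hzc e
      have h1 := star2 0 xx
      have h2 := AddSubgroup.mem_center_iff.mp hU0c (f (g xx))
      rw [h2, neg_add_cancel_left] at h1
      exact h1.symm
    · intro x
      have := AddSubgroup.neg_mem _ (hzc x)
      simpa [neg_add_rev] using this
  · rintro ⟨hcomm, hcen⟩
    have hzc : ∀ x, -(f x) + x ∈ AddSubgroup.center Q := by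
      intro x
      have := AddSubgroup.neg_mem _ (hcen x)
      simpa [neg_add_rev] using this
    intro x y z
    have hg : g (α x) = -(f x + e) + x := by
      have h0 := hα x
      rw [hmul] at h0
      rw [eq_neg_add_iff_add_eq]
      exact h0
    have hfα : g (f (α x)) = -(f (f x) + f e) + f x := by
      rw [← hcomm, hg]
      simp [map_add, map_neg, neg_add_rev, add_assoc]
    have main : f x + e + g (f y)
        = f (f x) + f e + g (f y) + e + (-(f (f x) + f e) + f x) := by
      exact stmt8_main (f x) (f (f x)) (f e) e (g (f y))
        (fun s => AddSubgroup.mem_center_iff.mp (hzc e) s)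
        (fun s => AddSubgroup.mem_center_iff.mp (hzc (f x)) s)
    simp only [hmul, map_add, hfα, hcomm, ← add_assoc]
    simp only [← add_assoc] at main
    rw [main]
end

section
/- Let (Q,+) be a group, h, k permutations of Q, and define x·y = h(x) + k(y). If (Q,·) is a right F-quasigroup, then h(x + y) = h(x) - h(0) + h(y) for all x,y ∈ Q; consequently x ↦ h(x) - h(0) and x ↦ -h(0) + h(x) are automorphisms of (Q,+). -/
/-!
Specialising the right F-law `(z·y)·0 = (z·β 0)·(y·0)` at a `z` with `h z = 0` expresses
`k (h y + k 0)` through `h (k y)`; substituting this back and using that `h` and `k` are onto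
gives `h (a + b) = h (a + c) - h c + h b` with `c = k (β 0)`, and putting `b = 0` removes the
shift `c`.
-/

open Function

section
variable {G : Type*} [AddGroup G] {h : G → G}

theorem map_add_eq_of_map_add_shift (c : G) (H : ∀ a b, h (a + b) = h (a + c) - h c + h b)
    (a b : G) : h (a + b) = h a - h 0 + h b := by
  have hshift : h (a + c) - h c = h a - h 0 := by
    have h_zero := H a 0
    rw [add_zero] at h_zero
    rw [h_zero, add_sub_cancel_right]
  rw [H, hshift]

theorem map_add_of_rightF_law {k : G → G} (hh : Surjective h) (hk : Surjective k) (c : G)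
    (hF : ∀ y z, h (h z + k y) + k 0 = h (h z + c) + k (h y + k 0)) (a b : G) :
    h (a + b) = h a - h 0 + h b := by
  obtain ⟨z₀, hz₀⟩ := hh 0
  have hk_shift : ∀ y, k (h y + k 0) = -h c + (h (k y) + k 0) := fun y => by
    have := hF y z₀
    rw [hz₀, zero_add, zero_add] at this
    rw [this, neg_add_cancel_left]
  refine map_add_eq_of_map_add_shift c (fun a b => ?_) a b
  obtain ⟨z, rfl⟩ := hh a
  obtain ⟨y, rfl⟩ := hk b
  have := hF y z
  rw [hk_shift, ← add_assoc, ← add_assoc, ← sub_eq_add_neg] at this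
  exact add_right_cancel this

variable (hh : Bijective h) (hadd : ∀ x y, h (x + y) = h x - h 0 + h y)

noncomputable def AddAut.ofMapAddSubMapZero : AddAut G :=
  AddEquiv.mk' ((Equiv.ofBijective h hh).trans (Equiv.subRight (h 0))) fun x y => by
    simp only [Equiv.trans_apply, Equiv.ofBijective_apply, Equiv.subRight_apply, hadd,
      sub_eq_add_neg, add_assoc]

noncomputable def AddAut.ofMapAddNegMapZeroAdd : AddAut G :=
  AddEquiv.mk' ((Equiv.ofBijective h hh).trans (Equiv.addLeft (-h 0))) fun x y => by
    simp only [Equiv.trans_apply, Equiv.ofBijective_apply, Equiv.coe_addLeft, hadd,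
      sub_eq_add_neg, add_assoc]

end

theorem stmt10_general {Q : Type*} [AddGroup Q] (h k : Q → Q)
    (hh : Function.Bijective h) (hk : Function.Bijective k)
    (mul : Q → Q → Q) (hmul : ∀ x y, mul x y = h x + k y)
    (β : Q → Q)
    (hFr : ∀ x y z, mul (mul z y) x = mul (mul z (β x)) (mul y x)) :
    (∀ x y, h (x + y) = h x - h 0 + h y) ∧
    (∃ φ : AddAut Q, ∀ x, φ x = h x - h 0) ∧
    (∃ ψ : AddAut Q, ∀ x, ψ x = -h 0 + h x) := by
  have hadd := map_add_of_rightF_law hh.2 hk.2 (k (β 0)) fun y z => by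
    simpa only [hmul] using hFr 0 y z
  exact ⟨hadd, ⟨AddAut.ofMapAddSubMapZero hh hadd, fun _ => rfl⟩,
    ⟨AddAut.ofMapAddNegMapZeroAdd hh hadd, fun _ => rfl⟩⟩

/-- If x·y = h(x) + k(y) defines a right F-quasigroup over a group (Q,+),
then h(x+y) = h(x) - h(0) + h(y), and x ↦ h(x) - h(0) and x ↦ -h(0) + h(x)
are automorphisms of (Q,+). -/
theorem stmt10 {Q : Type*} [AddGroup Q] (h k : Q → Q)
    (hh : Function.Bijective h) (hk : Function.Bijective k)
    (mul : Q → Q → Q) (hmul : ∀ x y, mul x y = h x + k y)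
    (β : Q → Q) (hβ : ∀ x, mul (β x) x = x)
    (hFr : ∀ x y z, mul (mul z y) x = mul (mul z (β x)) (mul y x)) :
    (∀ x y, h (x + y) = h x - h 0 + h y) ∧
    (∃ φ : AddAut Q, ∀ x, φ x = h x - h 0) ∧
    (∃ ψ : AddAut Q, ∀ x, ψ x = -h 0 + h x) :=
  stmt10_general h k hh hk mul hmul β hFr
end

section
/- Let (Q,+) be a group, h, k permutations of Q, and define x·y = h(x) + k(y). If (Q,·) is a left F-quasigroup, then k(x + y) = k(x) - k(0) + k(y) for all x,y ∈ Q. -/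
/-- If x·y = h(x) + k(y) defines a left F-quasigroup over a group (Q,+),
then k(x+y) = k(x) - k(0) + k(y). -/
theorem stmt11 {Q : Type*} [AddGroup Q] (h k : Q → Q)
    (hh : Function.Bijective h) (hk : Function.Bijective k)
    (mul : Q → Q → Q) (hmul : ∀ x y, mul x y = h x + k y)
    (α : Q → Q) (hα : ∀ x, mul x (α x) = x)
    (hFl : ∀ x y z, mul x (mul y z) = mul (mul x y) (mul (α x) z)) :
    ∀ x y, k (x + y) = k x - k 0 + k y := by
  -- Key identity from the F-law at x = 0
  have key : ∀ y z, h 0 + k (h y + k z) = h (h 0 + k y) + k (h (α 0) + k z) := by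
    intro y z
    have := hFl 0 y z
    simpa only [hmul] using this
  set c := h (α 0) with hc
  obtain ⟨z0, hz0⟩ := hk.2 0
  obtain ⟨y0, hy0⟩ := hh.2 0
  -- eq1: h (h 0 + k y) = h 0 + k (h y) - k c
  have eq1 : ∀ y, h (h 0 + k y) = h 0 + k (h y) - k c := by
    intro y
    have := key y z0
    rw [hz0, add_zero, add_zero] at this
    exact eq_sub_of_add_eq this.symm
  -- eq2: k (c + k z) = k c - k 0 + k (k z)
  have eq2 : ∀ z, k (c + k z) = k c - k 0 + k (k z) := by
    intro z
    have h3 := key y0 z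
    rw [hy0, zero_add, eq1 y0, hy0] at h3
    -- h3 : h 0 + k (k z) = h 0 + k 0 - k c + k (c + k z)
    have h4 : h 0 + k 0 - k c + k (c + k z) = h 0 + (k 0 - k c + k (c + k z)) := by
      simp [sub_eq_add_neg, add_assoc]
    rw [h4] at h3
    have h5 := add_left_cancel h3
    -- h5 : k (k z) = k 0 - k c + k (c + k z)
    have h6 : k (c + k z) = -(k 0 - k c) + k (k z) := by
      rw [h5]; simp [sub_eq_add_neg, add_assoc]
    rw [h6, neg_sub, sub_eq_add_neg]
  intro a b
  obtain ⟨y, hy⟩ := hh.2 a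
  obtain ⟨z, hz⟩ := hk.2 b
  have := key y z
  rw [eq1 y, eq2 z, hy, hz] at this
  -- this : h 0 + k (a + b) = h 0 + k a - k c + (k c - k 0 + k b)
  have h2 : h 0 + k a - k c + (k c - k 0 + k b) = h 0 + (k a - k 0 + k b) := by
    simp [sub_eq_add_neg, add_assoc]
  rw [h2] at this
  exact add_left_cancel this
end

section
/- Every FG-quasigroup is linear over a group: if Q is an FG-quasigroup, then there exist a group structure (Q,+) on Q, automorphisms f,g of (Q,+), and e ∈ Q such that x·y = f(x) + e + g(y) for all x,y ∈ Q. -/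
/-- Every FG-quasigroup is linear over a group: there is a group structure
(add, zero, neg) on Q, automorphisms f, g and e ∈ Q with
x·y = f(x) + e + g(y). -/
theorem stmt12 {Q : Type*} (mul : Q → Q → Q)
    (hL : ∀ a : Q, Function.Bijective (mul a))
    (hR : ∀ a : Q, Function.Bijective (fun x => mul x a))
    (α β : Q → Q)
    (hα : ∀ x, mul x (α x) = x) (hβ : ∀ x, mul (β x) x = x)
    (hFl : ∀ x y z, mul x (mul y z) = mul (mul x y) (mul (α x) z))
    (hFr : ∀ x y z, mul (mul z y) x = mul (mul z (β x)) (mul y x))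
    (hFG : ∃ a b : Q, isGroupIsotope mul a b) :
    ∃ (add : Q → Q → Q) (zero : Q) (neg : Q → Q) (f g : Q → Q) (e : Q),
      (∀ x y z, add (add x y) z = add x (add y z)) ∧
      (∀ x, add zero x = x) ∧ (∀ x, add x zero = x) ∧
      (∀ x, add (neg x) x = zero) ∧ (∀ x, add x (neg x) = zero) ∧
      (∀ x y, f (add x y) = add (f x) (f y)) ∧ Function.Bijective f ∧
      (∀ x y, g (add x y) = add (g x) (g y)) ∧ Function.Bijective g ∧
      (∀ x y, mul x y = add (add (f x) e) (g y)) := by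
  classical
  obtain ⟨a, b, la, ra, ha1, ha2, hb1, hb2, hassoc⟩ := hFG
  set add : Q → Q → Q := fun x y => mul (ra x) (la y) with hadddef
  set zero : Q := mul a b with hzerodef
  have assoc : ∀ x y z, add (add x y) z = add x (add y z) := fun x y z => hassoc x y z
  have zero_add' : ∀ x, add zero x = x := by
    intro x; show mul (ra (mul a b)) (la x) = x
    rw [hb2 a, ha1]
  have add_zero' : ∀ x, add x zero = x := by
    intro x; show mul (ra x) (la (mul a b)) = x
    rw [ha2 b, hb1]
  have exr : ∀ x, ∃ y, add x y = zero := by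
    intro x
    obtain ⟨w, hw⟩ := (hL (ra x)).2 zero
    exact ⟨mul a w, by show mul (ra x) (la (mul a w)) = zero; rw [ha2, hw]⟩
  have exl : ∀ x, ∃ z, add z x = zero := by
    intro x
    obtain ⟨w, hw⟩ := (hR (la x)).2 zero
    refine ⟨mul w b, ?_⟩
    show mul (ra (mul w b)) (la x) = zero
    rw [hb2]; exact hw
  choose neg hneg using exr
  have neg_add' : ∀ x, add (neg x) x = zero := by
    intro x
    obtain ⟨z, hz⟩ := exl x
    have hzx : z = neg x := by
      calc z = add z zero := (add_zero' z).symm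
        _ = add z (add x (neg x)) := by rw [hneg x]
        _ = add (add z x) (neg x) := (assoc _ _ _).symm
        _ = add zero (neg x) := by rw [hz]
        _ = neg x := zero_add' _
    rw [← hzx]; exact hz
  letI : Group Q :=
    { mul := add, mul_assoc := assoc, one := zero, one_mul := zero_add',
      mul_one := add_zero', inv := neg, inv_mul_cancel := neg_add' }
  have key : ∀ x y, mul x y = mul x b * mul a y := by
    intro x y
    show mul x y = mul (ra (mul x b)) (la (mul a y))
    rw [hb2, ha2]
  have quasi : ∀ h ψ χ : Q → Q, (∀ u v : Q, h (u * v) = ψ u * χ v) →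
      ∀ u v : Q, h (u * v) = h u * (h 1)⁻¹ * h v := by
    intro h ψ χ hs u v
    have hψ : ∀ u, ψ u = h u * (χ 1)⁻¹ := by
      intro u
      have h' := hs u 1
      rw [mul_one] at h'
      rw [h']; group
    have hχ : ∀ v, χ v = (ψ 1)⁻¹ * h v := by
      intro v
      have h' := hs 1 v
      rw [one_mul] at h'
      rw [h']; group
    have h1 : h 1 = ψ 1 * χ 1 := by
      have h' := hs 1 1
      rwa [one_mul] at h'
    rw [hs u v, hψ u, hχ v, h1]
    group
  have qR : ∀ u v : Q, mul (u * v) b = mul u b * (mul 1 b)⁻¹ * mul v b := by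
    refine quasi (fun t => mul t b) (fun u => mul (mul (ra u) (β b)) b)
      (fun v => mul a (mul (la v) b)) ?_
    intro u v
    show mul (mul (ra u) (la v)) b = _
    rw [hFr b (la v) (ra u)]
    exact key _ _
  have qL : ∀ u v : Q, mul a (u * v) = mul a u * (mul a 1)⁻¹ * mul a v := by
    refine quasi (fun t => mul a t) (fun u => mul (mul a (ra u)) b)
      (fun v => mul a (mul (α a) (la v))) ?_
    intro u v
    show mul a (mul (ra u) (la v)) = _
    rw [hFl a (ra u) (la v)]
    exact key _ _
  refine ⟨add, zero, neg, fun x => mul x b * (mul 1 b)⁻¹,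
    fun y => (mul a 1)⁻¹ * mul a y, mul 1 b * mul a 1,
    assoc, zero_add', add_zero', neg_add', hneg, ?_, ?_, ?_, ?_, ?_⟩
  · intro x y
    show mul (x * y) b * (mul 1 b)⁻¹ =
      (mul x b * (mul 1 b)⁻¹) * (mul y b * (mul 1 b)⁻¹)
    rw [qR x y]; group
  · exact (Group.mulRight_bijective ((mul 1 b)⁻¹)).comp (hR b)
  · intro x y
    show (mul a 1)⁻¹ * mul a (x * y) =
      ((mul a 1)⁻¹ * mul a x) * ((mul a 1)⁻¹ * mul a y)
    rw [qL x y]; group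
  · exact (Group.mulLeft_bijective ((mul a 1)⁻¹)).comp (hL a)
  · intro x y
    show mul x y = (mul x b * (mul 1 b)⁻¹) * (mul 1 b * mul a 1) *
      ((mul a 1)⁻¹ * mul a y)
    rw [key x y]; group
end

section
/- Let Q be an FG-quasigroup with arithmetic form x·y = f(x) + e + g(y) over a group (Q,+). Then M(Q) = {a ∈ Q : (x·a)·(y·x) = (x·y)·(a·x) for all x,y} equals Z(Q,+) - e, and also equals {a ∈ Q : (x·a)·(y·z) = (x·y)·(a·z) for all x,y,z}. -/
/-- In an FG-quasigroup with arithmetic form x·y = f(x) + e + g(y),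
M(Q) equals Z(Q,+) - e, and also equals
{a : (x·a)·(y·z) = (x·y)·(a·z) for all x,y,z}. -/
theorem stmt13 {Q : Type*} [AddGroup Q] (f g : AddAut Q) (e : Q)
    (hfg : ∀ x, f (g x) = g (f x))
    (hf : ∀ x : Q, -x + f x ∈ AddSubgroup.center Q)
    (hg : ∀ x : Q, -x + g x ∈ AddSubgroup.center Q)
    (mul : Q → Q → Q) (hmul : ∀ x y, mul x y = f x + e + g y) :
    {a : Q | ∀ x y, mul (mul x a) (mul y x) = mul (mul x y) (mul a x)} =
      (fun z => z - e) '' (AddSubgroup.center Q : Set Q) ∧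
    {a : Q | ∀ x y, mul (mul x a) (mul y x) = mul (mul x y) (mul a x)} =
      {a : Q | ∀ x y z, mul (mul x a) (mul y z) = mul (mul x y) (mul a z)} := by
  set c : Q → Q := fun y => -y + f (g y) with hc
  have hcent : ∀ y w : Q, w + c y = c y + w := by
    intro y w
    have h1 : (-y + g y) + (-(g y) + f (g y)) = c y := by
      simp [hc, add_assoc]
    have h2 : c y ∈ AddSubgroup.center Q := by
      rw [← h1]; exact AddSubgroup.add_mem _ (hg y) (hf (g y))
    exact AddSubgroup.mem_center_iff.mp h2 w
  have hF : ∀ y : Q, f (g y) = y + c y := fun y => (add_neg_cancel_left y _).symm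
  -- key reduction lemma
  have key : ∀ a x y z : Q,
      (f (f x + e + g a) + e + g (f y + e + g z) = f (f x + e + g y) + e + g (f a + e + g z))
        ↔ (f (g a) + e + g (f y) = f (g y) + e + g (f a)) := by
    intro a x y z
    simp only [map_add]
    have reassoc : ∀ u v : Q,
        f (f x) + f e + u + e + (v + g e + g (g z))
          = (f (f x) + f e) + ((u + e + v) + (g e + g (g z))) := by
      intro u v; simp only [add_assoc]
    rw [reassoc, reassoc, add_left_cancel_iff, add_right_cancel_iff]
  have norm : ∀ t s : Q, f (g t) + e + g (f s) = (t + e + s) + (c t + c s) := by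
    intro t s
    rw [← hfg s, hF t, hF s]
    calc (t + c t) + e + (s + c s)
        = (t + (e + (s + c s))) + c t := by
          rw [add_assoc (t + c t) e, add_assoc t (c t), ← hcent t (e + (s + c s)),
            ← add_assoc]
      _ = (((t + e) + s) + c s) + c t := by simp only [add_assoc]
      _ = ((t + e) + s) + (c s + c t) := by rw [add_assoc]
      _ = ((t + e) + s) + (c t + c s) := by rw [← hcent s (c t)]
  have cond : ∀ a : Q, (∀ y : Q, f (g a) + e + g (f y) = f (g y) + e + g (f a))
      ↔ a + e ∈ AddSubgroup.center Q := by
    intro a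
    constructor
    · intro h
      have h' : ∀ w : Q, a + e + w = w + e + a := by
        intro w
        have h2 := h w
        rw [norm a w, norm w a, hcent a (c w)] at h2
        exact add_right_cancel h2
      have h0 : a + e = e + a := by simpa using h' 0
      refine AddSubgroup.mem_center_iff.mpr fun w => ?_
      rw [h' w, h0]
      exact (add_assoc w e a).symm
    · intro h y
      have hz := AddSubgroup.mem_center_iff.mp h
      have ea : e + a = a + e := by
        have h1 := hz a
        have h3 : -a + ((a + e) + a) = e + a := by
          rw [add_assoc, neg_add_cancel_left]
        rw [← h3, ← h1, neg_add_cancel_left]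
      have main : a + e + y = y + e + a := by
        rw [add_assoc y e a, ea]
        exact (hz y).symm
      rw [norm a y, norm y a, hcent a (c y), main]
  have hPiff : ∀ a : Q, (∀ x y : Q, mul (mul x a) (mul y x) = mul (mul x y) (mul a x)) ↔
      (a + e ∈ AddSubgroup.center Q) := by
    intro a
    rw [← cond a]
    constructor
    · intro h y
      have h2 := h 0 y
      simp only [hmul] at h2
      exact (key a 0 y 0).mp h2
    · intro h x y
      simp only [hmul]
      exact (key a x y x).mpr (h y)
  have hP3iff : ∀ a : Q, (∀ x y z : Q, mul (mul x a) (mul y z) = mul (mul x y) (mul a z)) ↔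
      (a + e ∈ AddSubgroup.center Q) := by
    intro a
    rw [← cond a]
    constructor
    · intro h y
      have h2 := h 0 y 0
      simp only [hmul] at h2
      exact (key a 0 y 0).mp h2
    · intro h x y z
      simp only [hmul]
      exact (key a x y z).mpr (h y)
  constructor
  · ext a
    simp only [Set.mem_setOf_eq, Set.mem_image, SetLike.mem_coe]
    rw [hPiff a]
    constructor
    · intro h
      exact ⟨a + e, h, by simp⟩
    · rintro ⟨z, hz, rfl⟩
      simpa using hz
  · ext a
    simp only [Set.mem_setOf_eq]
    rw [hPiff a, ← hP3iff a]
end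

section
/- Let Q be an FG-quasigroup with arithmetic form x·y = f(x) + e + g(y). Then M(Q) = Z(Q,+) if and only if e ∈ Z(Q,+), if and only if 0 ∈ M(Q). -/
/-- In an FG-quasigroup with arithmetic form x·y = f(x) + e + g(y):
M(Q) = Z(Q,+) iff e ∈ Z(Q,+) iff 0 ∈ M(Q). -/
theorem stmt14 {Q : Type*} [AddGroup Q] (f g : AddAut Q) (e : Q)
    (hfg : ∀ x, f (g x) = g (f x))
    (hf : ∀ x : Q, -x + f x ∈ AddSubgroup.center Q)
    (hg : ∀ x : Q, -x + g x ∈ AddSubgroup.center Q)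
    (mul : Q → Q → Q) (hmul : ∀ x y, mul x y = f x + e + g y) :
    (({a : Q | ∀ x y, mul (mul x a) (mul y x) = mul (mul x y) (mul a x)} =
        (AddSubgroup.center Q : Set Q)) ↔ e ∈ AddSubgroup.center Q) ∧
    ((e ∈ AddSubgroup.center Q) ↔
      (0 : Q) ∈ {a : Q | ∀ x y, mul (mul x a) (mul y x) = mul (mul x y) (mul a x)}) := by
  have expand : ∀ a x y : Q,
      (mul (mul x a) (mul y x) = mul (mul x y) (mul a x)) ↔
      (g (f a) + e + g (f y) = g (f y) + e + g (f a)) := by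
    intro a x y
    simp only [hmul, map_add, add_assoc]
    rw [add_left_cancel_iff, add_left_cancel_iff]
    simp only [← add_assoc]
    rw [add_right_cancel_iff, add_right_cancel_iff, hfg a, hfg y]
  have key : ∀ a : Q, (a ∈ {a : Q | ∀ x y, mul (mul x a) (mul y x) = mul (mul x y) (mul a x)})
      ↔ ∀ z : Q, g (f a) + e + z = z + e + g (f a) := by
    intro a
    constructor
    · intro h z
      have h0 := (expand a 0 (f.symm (g.symm z))).mp (h 0 (f.symm (g.symm z)))
      simpa using h0
    · intro h x y
      exact (expand a x y).mpr (h (g (f y)))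
  have hgf : ∀ a : Q, -a + g (f a) ∈ AddSubgroup.center Q := by
    intro a
    have h := AddSubgroup.add_mem _ (hf a) (hg (f a))
    have heq : -a + f a + (-(f a) + g (f a)) = -a + g (f a) := by
      rw [add_assoc, ← add_assoc (f a), add_neg_cancel, zero_add]
    rwa [heq] at h
  have hcent : ∀ a : Q, a ∈ AddSubgroup.center Q ↔ g (f a) ∈ AddSubgroup.center Q := by
    intro a
    have h2 : a + (-a + g (f a)) = g (f a) := by rw [← add_assoc, add_neg_cancel, zero_add]
    rw [← h2]
    exact (AddSubgroup.add_mem_cancel_right _ (hgf a)).symm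
  have h2 : (e ∈ AddSubgroup.center Q) ↔
      (0 : Q) ∈ {a : Q | ∀ x y, mul (mul x a) (mul y x) = mul (mul x y) (mul a x)} := by
    rw [key 0]
    simp only [map_zero, zero_add, add_zero]
    rw [AddSubgroup.mem_center_iff]
    exact ⟨fun h z => (h z).symm, fun h z => (h z).symm⟩
  refine ⟨⟨fun hS => h2.mpr (by rw [hS]; exact AddSubgroup.zero_mem _), fun he => ?_⟩, h2⟩
  have he' : ∀ w : Q, w + e = e + w := AddSubgroup.mem_center_iff.mp he
  ext a
  have kk := key a
  constructor
  · intro h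
    have hz := kk.mp h
    refine SetLike.mem_coe.mpr ((hcent a).mpr (AddSubgroup.mem_center_iff.mpr fun w => ?_))
    have h1 := hz (-e + w)
    have l : g (f a) + e + (-e + w) = g (f a) + w := by
      rw [add_assoc, ← add_assoc e, add_neg_cancel, zero_add]
    have r : (-e + w) + e + g (f a) = w + g (f a) := by
      rw [add_assoc (-e) w e, he' w, ← add_assoc, neg_add_cancel, zero_add]
    rw [l, r] at h1
    exact h1.symm
  · intro h
    refine kk.mpr fun z => ?_
    have hc' := AddSubgroup.mem_center_iff.mp ((hcent a).mp (SetLike.mem_coe.mp h))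
    calc g (f a) + e + z = g (f a) + (e + z) := add_assoc _ _ _
      _ = g (f a) + (z + e) := by rw [he' z]
      _ = z + e + g (f a) := (hc' (z + e)).symm
end

section
/- A simple FG-quasigroup is either medial or a group. -/
/-- A simple FG-quasigroup is medial or a group. Simplicity: every
equivalence relation compatible with multiplication and both divisions is
trivial. -/
theorem stmt17 {Q : Type*} (mul ldiv rdiv : Q → Q → Q)
    (hL : ∀ a : Q, Function.Bijective (mul a))
    (hR : ∀ a : Q, Function.Bijective (fun x => mul x a))
    (hld : ∀ a b, mul a (ldiv a b) = b)
    (hrd : ∀ a b, mul (rdiv b a) a = b)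
    (α β : Q → Q)
    (hα : ∀ x, mul x (α x) = x) (hβ : ∀ x, mul (β x) x = x)
    (hA : ∀ x y u v, mul (mul x y) (mul (α u) v) = mul (mul x (α u)) (mul y v))
    (hB : ∀ x y u v, mul (mul x y) (mul (β u) v) = mul (mul x (β u)) (mul y v))
    (hsimple : ∀ r : Q → Q → Prop, Equivalence r →
      (∀ a b c d, r a b → r c d → r (mul a c) (mul b d)) →
      (∀ a b c d, r a b → r c d → r (ldiv a c) (ldiv b d)) →
      (∀ a b c d, r a b → r c d → r (rdiv a c) (rdiv b d)) →
      (∀ x y, r x y → x = y) ∨ (∀ x y, r x y)) :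
    (∀ x y a b, mul (mul x a) (mul b y) = mul (mul x b) (mul a y)) ∨
    ((∀ x y z, mul (mul x y) z = mul x (mul y z)) ∧
      ∃ e : Q, ∀ x, mul e x = x ∧ mul x e = x) := by
  by_cases hne : Nonempty Q
  · obtain ⟨q0⟩ := hne
    -- α is an endomorphism
    have hαend : ∀ x y, α (mul x y) = mul (α x) (α y) := by
      intro x y
      apply (hL (mul x y)).injective
      have h1 := hA x y x (α y)
      rw [hα, hα] at h1
      rw [hα, h1]
    -- β is an endomorphism
    have hβend : ∀ x y, β (mul x y) = mul (β x) (β y) := by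
      intro x y
      apply (hR (mul x y)).injective
      have h1 := hB (β x) x y y
      rw [hβ, hβ] at h1
      show mul (β (mul x y)) (mul x y) = mul (mul (β x) (β y)) (mul x y)
      exact (hβ _).trans h1
    -- compatibility of endomorphisms with divisions
    have hαld : ∀ a c, α (ldiv a c) = ldiv (α a) (α c) := by
      intro a c
      apply (hL (α a)).injective
      show mul (α a) (α (ldiv a c)) = mul (α a) (ldiv (α a) (α c))
      rw [← hαend, hld, hld]
    have hαrd : ∀ a c, α (rdiv a c) = rdiv (α a) (α c) := by
      intro a c
      apply (hR (α c)).injective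
      show mul (α (rdiv a c)) (α c) = mul (rdiv (α a) (α c)) (α c)
      rw [← hαend, hrd, hrd]
    have hβld : ∀ a c, β (ldiv a c) = ldiv (β a) (β c) := by
      intro a c
      apply (hL (β a)).injective
      show mul (β a) (β (ldiv a c)) = mul (β a) (ldiv (β a) (β c))
      rw [← hβend, hld, hld]
    have hβrd : ∀ a c, β (rdiv a c) = rdiv (β a) (β c) := by
      intro a c
      apply (hR (β c)).injective
      show mul (β (rdiv a c)) (β c) = mul (rdiv (β a) (β c)) (β c)
      rw [← hβend, hrd, hrd]
    -- kernel of α is a congruence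
    have kα := hsimple (fun a b => α a = α b)
      ⟨fun _ => rfl, fun h => h.symm, fun h1 h2 => h1.trans h2⟩
      (fun a b c d h1 h2 => by simp only [hαend, h1, h2])
      (fun a b c d h1 h2 => by simp only [hαld, h1, h2])
      (fun a b c d h1 h2 => by simp only [hαrd, h1, h2])
    have kβ := hsimple (fun a b => β a = β b)
      ⟨fun _ => rfl, fun h => h.symm, fun h1 h2 => h1.trans h2⟩
      (fun a b c d h1 h2 => by simp only [hβend, h1, h2])
      (fun a b c d h1 h2 => by simp only [hβld, h1, h2])
      (fun a b c d h1 h2 => by simp only [hβrd, h1, h2])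
    rcases kα with hαinj | hαconst
    · -- α injective ⇒ medial
      left
      intro x y a b
      apply hαinj
      show α _ = α _
      simp only [hαend]
      -- mediality on the image of α
      exact (hA (α x) (α b) a (α y)).symm.trans (by rw [hA])
    · rcases kβ with hβinj | hβconst
      · -- β injective ⇒ medial
        left
        intro x y a b
        apply hβinj
        show β _ = β _
        simp only [hβend]
        exact (hB (β x) (β b) a (β y)).symm.trans (by rw [hB])
      · -- α and β constant ⇒ group
        right
        set e := α q0 with he_def
        have he : ∀ x, mul x e = x := by
          intro x
          have : α x = e := hαconst x q0
          rw [← this, hα]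
        set f := β q0 with hf_def
        have hf : ∀ x, mul f x = x := by
          intro x
          have : β x = f := hβconst x q0
          rw [← this, hβ]
        have hef : e = f := by
          have h1 : mul f e = f := he f
          have h2 : mul f e = e := hf e
          rw [← h1, h2]
        constructor
        · intro x y z
          have h := hA x y q0 z
          rw [← he_def] at h
          rw [he, hef, hf] at h
          exact h
        · exact ⟨e, fun x => ⟨by rw [hef, hf], he x⟩⟩
  · left
    intro x
    exact absurd ⟨x⟩ hne
end

section
/- Let (Q,+,f₁,g₁,e₁) and (Q,*,f₂,g₂,e₂) be two arithmetic forms of the same FG-quasigroup Q such that the groups (Q,+) and (Q,*) have the same neutral element 0. Then (Q,+) = (Q,*), f₁ = f₂, g₁ = g₂, and e₁ = e₂. -/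
/-- `(add, zero, neg, f, g, e)` is an arithmetic form of the quasigroup
`(Q, mul)`: `(add, zero, neg)` is a group, `f, g` are commuting automorphisms
with `-x + f(x)` and `-x + g(x)` central, and `x·y = f(x) + e + g(y)`. -/
def IsArithmeticForm {Q : Type*} (mul : Q → Q → Q) (add : Q → Q → Q)
    (zero : Q) (neg : Q → Q) (f g : Q → Q) (e : Q) : Prop :=
  (∀ x y z, add (add x y) z = add x (add y z)) ∧
  (∀ x, add zero x = x) ∧ (∀ x, add x zero = x) ∧
  (∀ x, add (neg x) x = zero) ∧ (∀ x, add x (neg x) = zero) ∧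
  (∀ x y, f (add x y) = add (f x) (f y)) ∧ Function.Bijective f ∧
  (∀ x y, g (add x y) = add (g x) (g y)) ∧ Function.Bijective g ∧
  (∀ x, f (g x) = g (f x)) ∧
  (∀ x y, add (add (neg x) (f x)) y = add y (add (neg x) (f x))) ∧
  (∀ x y, add (add (neg x) (g x)) y = add y (add (neg x) (g x))) ∧
  (∀ x y, mul x y = add (add (f x) e) (g y))

lemma arithFacts {Q : Type*} {mul add : Q → Q → Q} {zero : Q} {neg : Q → Q}
    {f g : Q → Q} {e : Q}
    (h : IsArithmeticForm mul add zero neg f g e) :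
    (∀ a b c, add a b = add a c → b = c) ∧
    (∀ a b c, add b a = add c a → b = c) ∧
    (∀ x, mul x zero = add (f x) e) ∧
    (∀ y, mul zero y = add e (g y)) ∧
    mul zero zero = e ∧
    (∀ x y, mul x y = add (mul x zero) (add (neg e) (mul zero y))) ∧
    (∀ u, ∃ x, mul x zero = u) ∧
    (∀ v, ∃ y, mul zero y = v) := by
  obtain ⟨ha, hzl, hzr, hnl, hnr, hf, hfb, hg, hgb, -, -, -, hm⟩ := h
  have cl : ∀ a b c, add a b = add a c → b = c := by
    intro a b c hbc
    have : add (neg a) (add a b) = add (neg a) (add a c) := by rw [hbc]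
    rwa [← ha, ← ha, hnl, hzl, hzl] at this
  have cr : ∀ a b c, add b a = add c a → b = c := by
    intro a b c hbc
    have : add (add b a) (neg a) = add (add c a) (neg a) := by rw [hbc]
    rwa [ha, ha, hnr, hzr, hzr] at this
  have f0 : f zero = zero := by
    have := hf zero zero
    rw [hzl] at this
    exact (cr (f zero) zero (f zero) (by rw [hzl, ← this])).symm
  have g0 : g zero = zero := by
    have := hg zero zero
    rw [hzl] at this
    exact (cr (g zero) zero (g zero) (by rw [hzl, ← this])).symm
  have mx0 : ∀ x, mul x zero = add (f x) e := by
    intro x; rw [hm, g0, hzr]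
  have m0y : ∀ y, mul zero y = add e (g y) := by
    intro y; rw [hm, f0, hzl]
  refine ⟨cl, cr, mx0, m0y, by rw [mx0, f0, hzl], ?_, ?_, ?_⟩
  · intro x y
    rw [mx0, m0y, hm]
    rw [ha, ← ha (neg e) e (g y), hnl, hzl, ha]
  · intro u
    obtain ⟨x, hx⟩ := hfb.2 (add u (neg e))
    exact ⟨x, by rw [mx0, hx, ha, hnl, hzr]⟩
  · intro v
    obtain ⟨y, hy⟩ := hgb.2 (add (neg e) v)
    exact ⟨y, by rw [m0y, hy, ← ha, hnr, hzl]⟩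

/-- Two arithmetic forms of the same FG-quasigroup with the same neutral
element coincide. -/
theorem stmt18 {Q : Type*} (mul : Q → Q → Q)
    (add₁ add₂ : Q → Q → Q) (zero : Q) (neg₁ neg₂ : Q → Q)
    (f₁ g₁ f₂ g₂ : Q → Q) (e₁ e₂ : Q)
    (h₁ : IsArithmeticForm mul add₁ zero neg₁ f₁ g₁ e₁)
    (h₂ : IsArithmeticForm mul add₂ zero neg₂ f₂ g₂ e₂) :
    add₁ = add₂ ∧ f₁ = f₂ ∧ g₁ = g₂ ∧ e₁ = e₂ := by
  obtain ⟨cl₁, cr₁, mx0₁, m0y₁, m00₁, key₁, surL, surR⟩ := arithFacts h₁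
  obtain ⟨cl₂, cr₂, mx0₂, m0y₂, m00₂, key₂, -, -⟩ := arithFacts h₂
  obtain ⟨ha₁, hzl₁, hzr₁, hnl₁, hnr₁, -⟩ := h₁
  obtain ⟨ha₂, hzl₂, hzr₂, hnl₂, hnr₂, -⟩ := h₂
  have he : e₁ = e₂ := by rw [← m00₁, m00₂]
  -- key combined identity
  have K : ∀ u v, add₁ u (add₁ (neg₁ e₁) v) = add₂ u (add₂ (neg₂ e₂) v) := by
    intro u v
    obtain ⟨x, hx⟩ := surL u
    obtain ⟨y, hy⟩ := surR v
    rw [← hx, ← hy, ← key₁, key₂]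
  have K0 : ∀ u, add₁ u (neg₁ e₁) = add₂ u (neg₂ e₂) := by
    intro u
    have := K u zero
    rwa [hzr₁, hzr₂] at this
  have K0' : ∀ v, add₁ (neg₁ e₁) v = add₂ (neg₂ e₂) v := by
    intro v
    have := K zero v
    rwa [hzl₁, hzl₂] at this
  have hadd : add₁ = add₂ := by
    funext u v
    have h1 : add₁ u v =
        add₁ u (add₁ (neg₁ e₁) (add₁ (neg₁ (neg₁ e₁)) v)) := by
      rw [← ha₁ (neg₁ e₁), hnr₁, hzl₁]
    rw [h1, K, ← K0', ← ha₁ (neg₁ e₁), hnr₁, hzl₁]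
  have hf : f₁ = f₂ := by
    funext x
    refine cr₁ e₁ (f₁ x) (f₂ x) ?_
    rw [← mx0₁, mx0₂, ← he, ← hadd]
  have hg : g₁ = g₂ := by
    funext y
    refine cl₁ e₁ (g₁ y) (g₂ y) ?_
    rw [← m0y₁, m0y₂, ← he, ← hadd]
  exact ⟨hadd, hf, hg, he⟩
end

section
/- Let Q and P be FG-quasigroups with arithmetic forms (Q,+,f,g,e₁) and (P,+,h,k,e₂), and let φ : Q → P satisfy φ(0) = 0. Then φ is a quasigroup homomorphism (φ(x·y) = φ(x)·φ(y)) if and only if φ is a group homomorphism with φ∘f = h∘φ, φ∘g = k∘φ, and φ(e₁) = e₂. -/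
/-- For FG-quasigroups with arithmetic forms (Q,+,f,g,e₁) and (P,+,h,k,e₂)
and φ : Q → P with φ(0) = 0: φ is a quasigroup homomorphism iff φ is a group
homomorphism with φf = hφ, φg = kφ and φ(e₁) = e₂. -/
theorem stmt19 {Q P : Type*} [AddGroup Q] [AddGroup P]
    (f g : AddAut Q) (h k : AddAut P) (e₁ : Q) (e₂ : P)
    (hfg : ∀ x, f (g x) = g (f x))
    (hf : ∀ x : Q, -x + f x ∈ AddSubgroup.center Q)
    (hg : ∀ x : Q, -x + g x ∈ AddSubgroup.center Q)
    (hhk : ∀ x, h (k x) = k (h x))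
    (hh : ∀ x : P, -x + h x ∈ AddSubgroup.center P)
    (hk : ∀ x : P, -x + k x ∈ AddSubgroup.center P)
    (mulQ : Q → Q → Q) (hmQ : ∀ x y, mulQ x y = f x + e₁ + g y)
    (mulP : P → P → P) (hmP : ∀ x y, mulP x y = h x + e₂ + k y)
    (φ : Q → P) (h0 : φ 0 = 0) :
    (∀ x y, φ (mulQ x y) = mulP (φ x) (φ y)) ↔
      ((∀ x y, φ (x + y) = φ x + φ y) ∧
       (∀ x, φ (f x) = h (φ x)) ∧ (∀ x, φ (g x) = k (φ x)) ∧ φ e₁ = e₂) := by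
  constructor
  · intro H
    have key : ∀ x y, φ (f x + e₁ + g y) = h (φ x) + e₂ + k (φ y) := by
      intro x y; rw [← hmQ, ← hmP]; exact H x y
    have he : φ e₁ = e₂ := by simpa [h0] using key 0 0
    have key' : ∀ u v, φ (u + e₁ + v) = h (φ (f.symm u)) + e₂ + k (φ (g.symm v)) := by
      intro u v
      simpa using key (f.symm u) (g.symm v)
    have hL : ∀ u, φ (u + e₁) = h (φ (f.symm u)) + e₂ := by
      intro u; simpa [h0] using key' u 0
    have hR : ∀ v, φ (e₁ + v) = e₂ + k (φ (g.symm v)) := by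
      intro v; simpa [h0] using key' 0 v
    have star : ∀ a b, φ (a + -e₁ + b) = φ a + -e₂ + φ b := by
      intro a b
      have h1 := key' (a + -e₁) (-e₁ + b)
      have h2 := hL (a + -e₁)
      have h3 := hR (-e₁ + b)
      have e2 : h (φ (f.symm (a + -e₁))) = φ a + -e₂ := by
        have : φ (a + -e₁ + e₁) = φ a := by rw [neg_add_cancel_right]
        rw [this] at h2
        rw [h2]; simp
      have e3 : k (φ (g.symm (-e₁ + b))) = -e₂ + φ b := by
        have : φ (e₁ + (-e₁ + b)) = φ b := by rw [add_neg_cancel_left]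
        rw [this] at h3
        rw [h3]; simp
      have e1 : a + -e₁ + e₁ + (-e₁ + b) = a + -e₁ + b := by
        simp [add_assoc]
      rw [e1, e2, e3] at h1
      rw [h1]; simp [add_assoc]
    have hshift : ∀ a, φ (a + -e₁) = φ a + -e₂ := by
      intro a; simpa [h0] using star a 0
    have hadd : ∀ x y, φ (x + y) = φ x + φ y := by
      intro x y
      have h1 := star (x + e₁) y
      have e1 : x + e₁ + -e₁ + y = x + y := by simp [add_assoc]
      have e2 : φ (x + e₁) = φ x + e₂ := by
        have := hshift (x + e₁)
        simp at this
        have : φ (x + e₁) = φ x + e₂ := by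
          have h' := hshift (x + e₁)
          rw [add_neg_cancel_right] at h'
          have := congrArg (· + e₂) h'
          simpa [add_assoc] using this.symm
        exact this
      rw [e1, e2] at h1
      rw [h1]; simp [add_assoc]
    refine ⟨hadd, ?_, ?_, he⟩
    · intro x
      have h1 := key x 0
      simp [h0] at h1
      rw [hadd] at h1
      rw [he] at h1
      exact add_right_cancel h1
    · intro y
      have h1 := key 0 y
      simp [h0] at h1
      rw [hadd, he] at h1
      exact add_left_cancel h1
  · rintro ⟨hadd, hfφ, hgφ, he⟩ x y
    rw [hmQ, hmP, hadd, hadd, hfφ, hgφ, he]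
end
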